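/- Empirical best response against rationalizable profile is rationalizable: suppose a_{-i} is a profile of actions all surviving l−1 rounds of Δ-iterated dominance elimination, and suppose â ∈ A_i satisfies u_i(â, a_{-i}) ≥ u_i(x, a_{-i}) − Δ/2 for every mixed strategy x ∈ Δ(A_i) (e.g., â is an empirical best response with estimation error at most Δ/4 per action). Then â is not eliminated by round l of Δ-iterated dominance elimination, i.e., â ∉ E_l. -/

import Mathlib

/-- The set of mixed strategies (probability vectors) over a finite set. -/
def mixed (α : Type*) [Fintype α] : Set (α → ℝ) :=
  {x | (∀ a, 0 ≤ x a) ∧ ∑ a, x a = 1}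

/-- Action `a` of player `i` is `Δ`-dominated by some mixed strategy against all
opposing action profiles avoiding the set `E`. -/
def Dominated {N : ℕ} {A : Fin N → Type*} [∀ i, Fintype (A i)]
    (u : ∀ i : Fin N, (∀ j, A j) → ℝ) (Δ : ℝ) (E : Set ((i : Fin N) × A i))
    (i : Fin N) (a : A i) : Prop :=
  ∃ x ∈ mixed (A i), ∀ p : ∀ j, A j,
    (∀ j, j ≠ i → (⟨j, p j⟩ : (k : Fin N) × A k) ∉ E) →
    u i (Function.update p i a) ≤ (∑ b, x b * u i (Function.update p i b)) - Δ

/-- `Elim u Δ l` is the (cumulative) set `E_l` of actions eliminated by round `l`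
of `Δ`-iterated dominance elimination. -/
def Elim {N : ℕ} {A : Fin N → Type*} [∀ i, Fintype (A i)]
    (u : ∀ i : Fin N, (∀ j, A j) → ℝ) (Δ : ℝ) : ℕ → Set ((i : Fin N) × A i)
  | 0 => ∅
  | (l + 1) => Elim u Δ l ∪ {ia | Dominated u Δ (Elim u Δ l) ia.1 ia.2}

/-! An action eliminated by round `l` was `Δ`-dominated against some `E_k` with `k < l`.
As `E_k ⊆ E_{l-1}`, the profile `p` avoids `E_k`, so the dominating mixed strategy beats `â`
by `Δ` at `p` itself, contradicting that `â` is a `Δ/2`-best response to `p`. -/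

section Elimination

variable {N : ℕ} {A : Fin N → Type*} [∀ i, Fintype (A i)]
  {u : ∀ i : Fin N, (∀ j, A j) → ℝ} {Δ : ℝ}

theorem Dominated.mono {E F : Set ((i : Fin N) × A i)} (hEF : E ⊆ F) {i : Fin N} {a : A i}
    (h : Dominated u Δ E i a) : Dominated u Δ F i a := by
  obtain ⟨x, hx, hdom⟩ := h
  exact ⟨x, hx, fun p hp => hdom p fun j hj hmem => hp j hj (hEF hmem)⟩

theorem not_dominated_of_approx_best_response {E : Set ((i : Fin N) × A i)} {i : Fin N}
    {p : ∀ j, A j} {a : A i} {ε : ℝ} (hε : ε < Δ)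
    (hp : ∀ j, j ≠ i → (⟨j, p j⟩ : (k : Fin N) × A k) ∉ E)
    (hbr : ∀ x ∈ mixed (A i),
      (∑ b, x b * u i (Function.update p i b)) - ε ≤ u i (Function.update p i a)) :
    ¬ Dominated u Δ E i a := by
  rintro ⟨x, hx, hdom⟩
  linarith [hdom p hp, hbr x hx]

variable (u Δ) in
theorem Elim_mono : Monotone (Elim u Δ) :=
  monotone_nat_of_le_succ fun _ => Set.subset_union_left

theorem exists_dominated_of_mem_Elim {l : ℕ} {ia : (i : Fin N) × A i}
    (h : ia ∈ Elim u Δ l) : ∃ k < l, Dominated u Δ (Elim u Δ k) ia.1 ia.2 := by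
  induction l with
  | zero => exact absurd h (Set.notMem_empty ia)
  | succ l ih =>
    rcases h with h | h
    · obtain ⟨k, hk, hdom⟩ := ih h
      exact ⟨k, by omega, hdom⟩
    · exact ⟨l, l.lt_succ_self, h⟩

end Elimination

theorem empirical_best_response_rationalizable_general
    {N : ℕ} {A : Fin N → Type*} [∀ i, Fintype (A i)]
    (u : ∀ i : Fin N, (∀ j, A j) → ℝ) (Δ : ℝ) (hΔ : 0 < Δ)
    (l : ℕ) (i : Fin N) (p : ∀ j, A j)
    (hsurv : ∀ j, j ≠ i → (⟨j, p j⟩ : (k : Fin N) × A k) ∉ Elim u Δ (l - 1))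
    (ahat : A i)
    (hbr : ∀ x ∈ mixed (A i),
      (∑ b, x b * u i (Function.update p i b)) - Δ / 2
        ≤ u i (Function.update p i ahat)) :
    (⟨i, ahat⟩ : (k : Fin N) × A k) ∉ Elim u Δ l := by
  intro hmem
  obtain ⟨k, hk, hdom⟩ := exists_dominated_of_mem_Elim hmem
  have hsurv_k : ∀ j, j ≠ i → (⟨j, p j⟩ : (k : Fin N) × A k) ∉ Elim u Δ k :=
    fun j hj hmem_k => hsurv j hj (Elim_mono u Δ (by omega) hmem_k)
  exact not_dominated_of_approx_best_response (by linarith) hsurv_k hbr hdom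

/-- Empirical best response against a rationalizable profile is rationalizable:
if all opponents' actions in the profile `p` survive `l−1` rounds of
`Δ`-iterated dominance elimination (i.e. avoid `E_{l-1}`), and `â` is a
`Δ/2`-best response to `p_{-i}` among all mixed strategies, then `â ∉ E_l`. -/
theorem empirical_best_response_rationalizable
    {N : ℕ} {A : Fin N → Type*} [∀ i, Fintype (A i)]
    (u : ∀ i : Fin N, (∀ j, A j) → ℝ) (Δ : ℝ) (hΔ : 0 < Δ)
    (l : ℕ) (hl : 1 ≤ l) (i : Fin N) (p : ∀ j, A j)
    (hsurv : ∀ j, j ≠ i → (⟨j, p j⟩ : (k : Fin N) × A k) ∉ Elim u Δ (l - 1))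
    (ahat : A i)
    (hbr : ∀ x ∈ mixed (A i),
      (∑ b, x b * u i (Function.update p i b)) - Δ / 2
        ≤ u i (Function.update p i ahat)) :
    (⟨i, ahat⟩ : (k : Fin N) × A k) ∉ Elim u Δ l :=
  empirical_best_response_rationalizable_general u Δ hΔ l i p hsurv ahat hbr
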